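/- arXiv:2507.12647 — 2 statements merged into one kernel-verified Lean document; each statement's English description precedes it below -/
import Mathlib

section
/- Under the setup where the u-quantile of the proxy posterior probability is τ^{(n)}_u = Φ((δ_m − δ*)√(n/Σ) + Φ^{-1}(u)) with Σ > 0 and δ* ≠ δ_m, the derivative in n of logit(τ^{(n)}_u) converges, as n → ∞, to (0.5 − 𝟙{δ* ≥ δ_m}) · (δ_m − δ*)²/Σ. -/
open Real Set Filter

/-- The logit function logit(x) = log x − log(1 − x). -/
noncomputable def logit (x : ℝ) : ℝ := Real.log x - Real.log (1 - x)

/-- The standard normal cumulative distribution function Φ. -/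
noncomputable def stdNormalCDF (x : ℝ) : ℝ :=
  ∫ t in Iic x, Real.exp (-t ^ 2 / 2) / Real.sqrt (2 * Real.pi)

noncomputable def gpdf (t : ℝ) : ℝ := Real.exp (-t ^ 2 / 2) / Real.sqrt (2 * Real.pi)

open MeasureTheory



lemma gpdf_eq (t : ℝ) : gpdf t = Real.exp (-(1/2) * t ^ 2) / Real.sqrt (2 * Real.pi) := by
  unfold gpdf; ring_nf

lemma gpdf_pos (t : ℝ) : 0 < gpdf t :=
  div_pos (Real.exp_pos _) (Real.sqrt_pos.2 (by positivity))

lemma gpdf_cont : Continuous gpdf := by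
  unfold gpdf
  exact (Real.continuous_exp.comp (by continuity)).div_const _

lemma gpdf_int : Integrable gpdf := by
  have := (integrable_exp_neg_mul_sq (by norm_num : (0:ℝ) < 1/2)).div_const (Real.sqrt (2 * Real.pi))
  refine this.congr ?_
  filter_upwards with t
  rw [gpdf_eq]

lemma gpdf_total : ∫ t, gpdf t = 1 := by
  have h : ∫ t : ℝ, Real.exp (-(1/2) * t ^ 2) = Real.sqrt (Real.pi / (1/2)) :=
    integral_gaussian (1/2)
  have : ∫ t, gpdf t = (∫ t : ℝ, Real.exp (-(1/2) * t ^ 2)) / Real.sqrt (2 * Real.pi) := by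
    simp_rw [gpdf_eq]
    exact integral_div _ _
  rw [this, h]
  rw [div_eq_one_iff_eq (by positivity)]
  congr 1; ring

lemma gpdf_even (t : ℝ) : gpdf (-t) = gpdf t := by unfold gpdf; ring_nf




lemma cdf_eq (x : ℝ) : stdNormalCDF x = ∫ t in Iic x, gpdf t := rfl

lemma cdf_hasDeriv (x : ℝ) : HasDerivAt stdNormalCDF (gpdf x) x := by
  have h0 : ∀ y : ℝ, stdNormalCDF y = stdNormalCDF 0 + ∫ t in (0:ℝ)..y, gpdf t := by
    intro y
    rw [cdf_eq, cdf_eq, ← intervalIntegral.integral_Iic_sub_Iic gpdf_int.integrableOn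
      gpdf_int.integrableOn]
    ring
  have hD : HasDerivAt (fun y => stdNormalCDF 0 + ∫ t in (0:ℝ)..y, gpdf t) (gpdf x) x := by
    refine HasDerivAt.const_add _ ?_
    exact intervalIntegral.integral_hasDerivAt_right gpdf_int.intervalIntegrable
      gpdf_cont.aestronglyMeasurable.stronglyMeasurableAtFilter gpdf_cont.continuousAt
  have heq : stdNormalCDF = fun y => stdNormalCDF 0 + ∫ t in (0:ℝ)..y, gpdf t := funext h0
  rw [heq]; exact hD

lemma cdf_pos (x : ℝ) : 0 < stdNormalCDF x := by
  rw [cdf_eq]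
  rw [setIntegral_pos_iff_support_of_nonneg_ae
    (Filter.Eventually.of_forall fun t => (gpdf_pos t).le) gpdf_int.integrableOn]
  have : Function.support gpdf = univ := by
    ext t; simp [Function.support, (gpdf_pos t).ne']
  rw [this, univ_inter]
  simp [Real.volume_Iic]

lemma cdf_tail (x : ℝ) : ∫ t in Ioi x, gpdf t = 1 - stdNormalCDF x := by
  have := intervalIntegral.integral_Iic_add_Ioi (b := x) gpdf_int.integrableOn gpdf_int.integrableOn
  rw [gpdf_total] at this
  rw [cdf_eq]; linarith

lemma cdf_lt_one (x : ℝ) : stdNormalCDF x < 1 := by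
  have h : 0 < ∫ t in Ioi x, gpdf t := by
    rw [setIntegral_pos_iff_support_of_nonneg_ae
      (Filter.Eventually.of_forall fun t => (gpdf_pos t).le) gpdf_int.integrableOn]
    have : Function.support gpdf = univ := by
      ext t; simp [Function.support, (gpdf_pos t).ne']
    rw [this, univ_inter]
    simp [Real.volume_Ioi]
  rw [cdf_tail] at h; linarith

lemma cdf_symm (x : ℝ) : stdNormalCDF (-x) = 1 - stdNormalCDF x := by
  rw [← cdf_tail, cdf_eq]
  rw [← integral_comp_neg_Ioi]
  simp_rw [gpdf_even]



lemma gpdf_hasDeriv (t : ℝ) : HasDerivAt gpdf (-t * gpdf t) t := by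
  have h1 : HasDerivAt (fun t : ℝ => -t ^ 2 / 2) (-t) t := by
    have := ((hasDerivAt_pow 2 t).neg).div_const 2
    exact this.congr_deriv (by push_cast; ring)
  have h2 := (h1.exp).div_const (Real.sqrt (2 * Real.pi))
  exact h2.congr_deriv (by unfold gpdf; ring)

lemma gpdf_tendsto_zero : Tendsto gpdf atTop (nhds 0) := by
  have h1 : Tendsto (fun t : ℝ => -t ^ 2 / 2) atTop atBot := by
    apply Filter.Tendsto.atBot_div_const (by norm_num)
    exact tendsto_neg_atBot_iff.mpr (tendsto_pow_atTop (by norm_num))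
  have h2 : Tendsto (fun t : ℝ => Real.exp (-t ^ 2 / 2)) atTop (nhds 0) :=
    Real.tendsto_exp_atBot.comp h1
  have h3 := h2.div_const (Real.sqrt (2 * Real.pi))
  rw [zero_div] at h3
  exact h3

lemma tgpdf_int (x : ℝ) : IntegrableOn (fun t => t * gpdf t) (Ioi x) := by
  have := (integrable_mul_exp_neg_mul_sq (by norm_num : (0:ℝ) < 1/2)).div_const
    (Real.sqrt (2 * Real.pi))
  refine (this.congr ?_).integrableOn
  filter_upwards with t
  unfold gpdf; ring_nf

lemma tail_mul (x : ℝ) : ∫ t in Ioi x, t * gpdf t = gpdf x := by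
  have h := integral_Ioi_of_hasDerivAt_of_tendsto (f := fun t => -gpdf t)
    (f' := fun t => t * gpdf t) (a := x) (m := 0)
    (gpdf_cont.neg.continuousWithinAt)
    (fun t _ => by have := (gpdf_hasDeriv t).neg; simp only [neg_mul, neg_neg] at this; exact this)
    (tgpdf_int x)
    (by simpa using gpdf_tendsto_zero.neg)
  simpa using h

lemma mills_upper {x : ℝ} (hx : 0 < x) : 1 - stdNormalCDF x ≤ gpdf x / x := by
  rw [← cdf_tail]
  have h1 : ∫ t in Ioi x, gpdf t ≤ ∫ t in Ioi x, t * gpdf t / x := by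
    refine setIntegral_mono_on gpdf_int.integrableOn ((tgpdf_int x).div_const x)
      measurableSet_Ioi ?_
    intro t ht
    rw [mem_Ioi] at ht
    rw [le_div_iff₀ hx]
    have := (gpdf_pos t).le
    nlinarith
  calc ∫ t in Ioi x, gpdf t ≤ ∫ t in Ioi x, t * gpdf t / x := h1
    _ = (∫ t in Ioi x, t * gpdf t) / x := by rw [integral_div]
    _ = gpdf x / x := by rw [tail_mul]

lemma mills_fun_int (x : ℝ) :
    IntegrableOn (fun t => gpdf t * (1 - 2 / (1 + t ^ 2) ^ 2)) (Ioi x) := by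
  refine Integrable.mono gpdf_int.integrableOn ?_ ?_
  · have hc : Continuous fun t : ℝ => 1 - 2 / (1 + t ^ 2) ^ 2 :=
      continuous_const.sub (continuous_const.div (by continuity) (fun t => by positivity))
    exact ((gpdf_cont.mul hc).aestronglyMeasurable).restrict
  · filter_upwards with t
    have h1 : (0:ℝ) < (1 + t ^ 2) ^ 2 := by positivity
    have h2 : |1 - 2 / (1 + t ^ 2) ^ 2| ≤ 1 := by
      rw [abs_le]
      constructor
      · have : 2 / (1 + t ^ 2) ^ 2 ≤ 2 := by
          rw [div_le_iff₀ h1]; nlinarith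
        linarith
      · have : 0 < 2 / (1 + t ^ 2) ^ 2 := by positivity
        linarith
    calc ‖gpdf t * (1 - 2 / (1 + t ^ 2) ^ 2)‖ = gpdf t * |1 - 2 / (1 + t ^ 2) ^ 2| := by
          rw [norm_mul, Real.norm_eq_abs, Real.norm_eq_abs, abs_of_pos (gpdf_pos t)]
      _ ≤ gpdf t * 1 := mul_le_mul_of_nonneg_left h2 (gpdf_pos t).le
      _ = gpdf t := mul_one _
      _ ≤ ‖gpdf t‖ := le_abs_self _

lemma millsF_hasDeriv (t : ℝ) :
    HasDerivAt (fun t => gpdf t * (t / (1 + t ^ 2)))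
      (-(gpdf t * (1 - 2 / (1 + t ^ 2) ^ 2))) t := by
  have hden : (1 + t ^ 2) ≠ 0 := by positivity
  have h1 : HasDerivAt (fun t : ℝ => t / (1 + t ^ 2))
      ((1 * (1 + t ^ 2) - t * (2 * t)) / (1 + t ^ 2) ^ 2) t := by
    have ha : HasDerivAt (fun t : ℝ => t) 1 t := hasDerivAt_id t
    have hb : HasDerivAt (fun t : ℝ => 1 + t ^ 2) (2 * t) t := by
      have := (hasDerivAt_pow 2 t).const_add 1
      exact this.congr_deriv (by push_cast; ring)
    exact ha.div hb hden
  have h2 := (gpdf_hasDeriv t).mul h1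
  exact h2.congr_deriv (by field_simp; ring)

lemma ratio_tendsto : Tendsto (fun t : ℝ => t / (1 + t ^ 2)) atTop (nhds 0) := by
  have hA : Tendsto (fun t : ℝ => 1 / t + t) atTop atTop := by
    refine tendsto_atTop_mono' atTop ?_ tendsto_id
    filter_upwards [eventually_gt_atTop 0] with t ht
    have : 0 < 1 / t := by positivity
    simp only [id]; linarith
  have hB : Tendsto (fun t : ℝ => (1 / t + t)⁻¹) atTop (nhds 0) :=
    tendsto_inv_atTop_zero.comp hA
  refine hB.congr' ?_
  filter_upwards [eventually_gt_atTop 0] with t ht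
  have hval : 1 / t + t = (1 + t ^ 2) / t := by
    field_simp
  rw [hval, inv_div]

lemma mills_lower (x : ℝ) : gpdf x * (x / (1 + x ^ 2)) ≤ 1 - stdNormalCDF x := by
  rw [← cdf_tail]
  have hcq : Continuous fun t : ℝ => t / (1 + t ^ 2) :=
    continuous_id.div (by continuity) (fun t => by positivity)
  have key : ∫ t in Ioi x, gpdf t * (1 - 2 / (1 + t ^ 2) ^ 2) = gpdf x * (x / (1 + x ^ 2)) := by
    have h := integral_Ioi_of_hasDerivAt_of_tendsto
      (f := fun t => gpdf t * (t / (1 + t ^ 2)))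
      (f' := fun t => -(gpdf t * (1 - 2 / (1 + t ^ 2) ^ 2))) (a := x) (m := 0)
      ((gpdf_cont.mul hcq).continuousWithinAt)
      (fun t _ => millsF_hasDeriv t)
      ((mills_fun_int x).neg)
      (by simpa using gpdf_tendsto_zero.mul ratio_tendsto)
    rw [MeasureTheory.integral_neg] at h
    linarith [h]
  rw [← key]
  refine setIntegral_mono_on (mills_fun_int x) gpdf_int.integrableOn measurableSet_Ioi ?_
  intro t _
  have h2 : 0 < 2 / (1 + t ^ 2) ^ 2 := by positivity
  nlinarith [gpdf_pos t, (gpdf_pos t).le]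




lemma cdf_tendsto_one : Tendsto stdNormalCDF atTop (nhds 1) := by
  have h0 : Tendsto (fun x => 1 - stdNormalCDF x) atTop (nhds 0) := by
    have hub : Tendsto (fun x : ℝ => gpdf x / x) atTop (nhds 0) := by
      have := gpdf_tendsto_zero.mul tendsto_inv_atTop_zero
      simpa [div_eq_mul_inv] using this
    refine tendsto_of_tendsto_of_tendsto_of_le_of_le' tendsto_const_nhds hub ?_ ?_
    · filter_upwards with x
      linarith [cdf_lt_one x]
    · filter_upwards [eventually_gt_atTop 0] with x hx
      exact mills_upper hx
  have h1 : Tendsto (fun x => 1 - (1 - stdNormalCDF x)) atTop (nhds (1 - 0)) :=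
    tendsto_const_nhds.sub h0
  simpa using h1

lemma mills_ratio :
    Tendsto (fun x => gpdf x / (x * (1 - stdNormalCDF x))) atTop (nhds 1) := by
  have hub : Tendsto (fun x : ℝ => (1 + x ^ 2) / x ^ 2) atTop (nhds 1) := by
    have h2 : Tendsto (fun x : ℝ => 1 / x ^ 2 + 1) atTop (nhds 1) := by
      have := (tendsto_const_nhds (x := (1:ℝ)).div_atTop
        (tendsto_pow_atTop two_ne_zero)).add_const 1
      simpa using this
    refine h2.congr' ?_
    filter_upwards [eventually_gt_atTop 0] with x hx
    field_simp
  refine tendsto_of_tendsto_of_tendsto_of_le_of_le' tendsto_const_nhds hub ?_ ?_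
  · filter_upwards [eventually_gt_atTop 0] with x hx
    have h1 : 0 < 1 - stdNormalCDF x := by linarith [cdf_lt_one x]
    have h2 : x * (1 - stdNormalCDF x) ≤ gpdf x := by
      have := mills_upper hx
      rw [le_div_iff₀ hx] at this
      linarith
    rw [le_div_iff₀ (by positivity)]
    linarith
  · filter_upwards [eventually_gt_atTop 0] with x hx
    have h1 : 0 < 1 - stdNormalCDF x := by linarith [cdf_lt_one x]
    have h2 := mills_lower x
    have hden : (0:ℝ) < 1 + x ^ 2 := by positivity
    have h3 : gpdf x * x ≤ (1 - stdNormalCDF x) * (1 + x ^ 2) := by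
      rw [← mul_div_assoc, div_le_iff₀ hden] at h2
      linarith
    rw [div_le_div_iff₀ (by positivity) (by positivity)]
    nlinarith [mul_le_mul_of_nonneg_right h3 hx.le]

lemma aux_pos (Sig a z : ℝ) (hSig : 0 < Sig) (ha : 0 < a) :
    Tendsto (deriv fun n : ℝ => logit (stdNormalCDF (a * Real.sqrt (n / Sig) + z)))
      atTop (nhds (a ^ 2 / (2 * Sig))) := by
  set x : ℝ → ℝ := fun n => a * Real.sqrt (n / Sig) + z with hxdef
  set s' : ℝ → ℝ := fun n => 1 / (2 * Real.sqrt (n / Sig)) * (1 / Sig) with hs'def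
  set D : ℝ → ℝ := fun n =>
    gpdf (x n) * (a * s' n) / stdNormalCDF (x n) +
      gpdf (x n) * (a * s' n) / (1 - stdNormalCDF (x n)) with hDdef
  -- Step 1: derivative formula for n > 0
  have hderiv : ∀ n : ℝ, 0 < n →
      HasDerivAt (fun n : ℝ => logit (stdNormalCDF (a * Real.sqrt (n / Sig) + z))) (D n) n := by
    intro n hn
    have hne : n / Sig ≠ 0 := by positivity
    have hs : HasDerivAt (fun n : ℝ => Real.sqrt (n / Sig)) (s' n) n := by
      have h1 : HasDerivAt (fun n : ℝ => n / Sig) (1 / Sig) n := by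
        simpa using (hasDerivAt_id n).div_const Sig
      have h2 := (Real.hasDerivAt_sqrt hne).comp n h1
      exact h2.congr_deriv (by simp [hs'def])
    have hx : HasDerivAt x (a * s' n) n := ((hs.const_mul a).add_const z)
    have hΦ : HasDerivAt (fun n => stdNormalCDF (x n)) (gpdf (x n) * (a * s' n)) n :=
      (cdf_hasDeriv (x n)).comp n hx
    have hlog1 := hΦ.log (cdf_pos (x n)).ne'
    have h1m : HasDerivAt (fun n => 1 - stdNormalCDF (x n)) (-(gpdf (x n) * (a * s' n))) n :=
      hΦ.const_sub 1
    have hlog2 := h1m.log (by linarith [cdf_lt_one (x n)] : 1 - stdNormalCDF (x n) ≠ 0)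
    have htot := hlog1.sub hlog2
    have : gpdf (x n) * (a * s' n) / stdNormalCDF (x n) -
        -(gpdf (x n) * (a * s' n)) / (1 - stdNormalCDF (x n)) = D n := by
      rw [hDdef]; ring
    rw [this] at htot
    exact htot
  -- Step 2: limit of D
  have hsqrt : Tendsto Real.sqrt atTop atTop := by
    refine (tendsto_rpow_atTop (by norm_num : (0:ℝ) < 1/2)).congr' ?_
    filter_upwards with t
    rw [Real.sqrt_eq_rpow]
  have hsx : Tendsto (fun n : ℝ => Real.sqrt (n / Sig)) atTop atTop :=
    hsqrt.comp (tendsto_id.atTop_div_const hSig)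
  have hxx : Tendsto x atTop atTop :=
    tendsto_atTop_add_const_right _ z (hsx.const_mul_atTop ha)
  have hs'0 : Tendsto s' atTop (nhds 0) := by
    have h1 : Tendsto (fun n : ℝ => 1 / (2 * Real.sqrt (n / Sig))) atTop (nhds 0) :=
      tendsto_const_nhds.div_atTop (hsx.const_mul_atTop two_pos)
    simpa [hs'def] using h1.mul_const (1 / Sig)
  have has'0 : Tendsto (fun n => a * s' n) atTop (nhds 0) := by
    have := hs'0.const_mul a
    rw [mul_zero] at this
    exact this
  have hterm1 : Tendsto (fun n => gpdf (x n) / stdNormalCDF (x n) * (a * s' n))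
      atTop (nhds 0) := by
    have h1 : Tendsto (fun n => gpdf (x n) / stdNormalCDF (x n)) atTop (nhds 0) := by
      have := (gpdf_tendsto_zero.comp hxx).div (cdf_tendsto_one.comp hxx) one_ne_zero
      rw [zero_div] at this; exact this
    simpa using h1.mul has'0
  have hxs' : Tendsto (fun n => x n * (a * s' n)) atTop (nhds (a ^ 2 / (2 * Sig))) := by
    have h2 : Tendsto (fun n : ℝ => a ^ 2 / (2 * Sig) + z * a * s' n) atTop
        (nhds (a ^ 2 / (2 * Sig))) := by
      have h3 := (tendsto_const_nhds (x := a ^ 2 / (2 * Sig)) (f := atTop (α := ℝ))).add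
        (hs'0.const_mul (z * a))
      rw [mul_zero, add_zero] at h3
      exact h3
    refine h2.congr' ?_
    filter_upwards [eventually_gt_atTop 0] with n hn
    have hsq : 0 < Real.sqrt (n / Sig) := Real.sqrt_pos.2 (by positivity)
    rw [hxdef, hs'def]
    field_simp
  have hterm2 : Tendsto (fun n =>
      gpdf (x n) / (x n * (1 - stdNormalCDF (x n))) * (x n * (a * s' n)))
      atTop (nhds (a ^ 2 / (2 * Sig))) := by
    have h1 := (mills_ratio.comp hxx).mul hxs'
    simpa using h1
  have hD : Tendsto D atTop (nhds (a ^ 2 / (2 * Sig))) := by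
    have hsum := hterm1.add hterm2
    rw [zero_add] at hsum
    refine hsum.congr' ?_
    filter_upwards [hxx.eventually_gt_atTop 0] with n hxn
    have h1 : 0 < stdNormalCDF (x n) := cdf_pos _
    have h2 : 0 < 1 - stdNormalCDF (x n) := by linarith [cdf_lt_one (x n)]
    rw [hDdef]
    field_simp
  -- Step 3: conclude
  refine hD.congr' ?_
  filter_upwards [eventually_gt_atTop 0] with n hn
  exact ((hderiv n hn).deriv).symm
lemma logit_one_sub (p : ℝ) : logit (1 - p) = -logit p := by
  unfold logit
  rw [sub_sub_cancel]
  ring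

/-- Marginal version of Theorem 1: for the u-quantile
τ⁽ⁿ⁾_u = Φ((δ_m − δ*)√(n/Σ) + Φ⁻¹(u)) of the proxy posterior probability, with
Σ > 0 and δ* ≠ δ_m, the derivative in n of logit(τ⁽ⁿ⁾_u) converges as n → ∞ to
(0.5 − 𝟙{δ* ≥ δ_m}) · (δ_m − δ*)²/Σ.  Here z = Φ⁻¹(u). -/
theorem limit_slope_logit_quantile (δstar δm Sig : ℝ) (hSig : 0 < Sig)
    (hne : δstar ≠ δm) (u : ℝ) (hu : u ∈ Ioo (0 : ℝ) 1)
    (z : ℝ) (hz : stdNormalCDF z = u) :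
    Tendsto
      (deriv fun n : ℝ =>
        logit (stdNormalCDF ((δm - δstar) * Real.sqrt (n / Sig) + z)))
      atTop
      (nhds ((0.5 - if δm ≤ δstar then 1 else 0) * (δm - δstar) ^ 2 / Sig)) := by
  by_cases hc : δm ≤ δstar
  · have ha : 0 < δstar - δm := sub_pos.2 (lt_of_le_of_ne hc (Ne.symm hne))
    have hfun : (fun n : ℝ => logit (stdNormalCDF ((δm - δstar) * Real.sqrt (n / Sig) + z)))
        = fun n : ℝ => -logit (stdNormalCDF ((δstar - δm) * Real.sqrt (n / Sig) + -z)) := by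
      funext n
      have hx : (δm - δstar) * Real.sqrt (n / Sig) + z
          = -((δstar - δm) * Real.sqrt (n / Sig) + -z) := by ring
      rw [hx, cdf_symm, logit_one_sub]
    rw [hfun]
    have hD : (deriv fun n : ℝ =>
          -logit (stdNormalCDF ((δstar - δm) * Real.sqrt (n / Sig) + -z)))
        = fun n : ℝ => -(deriv (fun n : ℝ =>
          logit (stdNormalCDF ((δstar - δm) * Real.sqrt (n / Sig) + -z))) n) := by
      funext n
      exact deriv.neg
    rw [hD]
    have hval : (0.5 - if δm ≤ δstar then (1:ℝ) else 0) * (δm - δstar) ^ 2 / Sig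
        = -((δstar - δm) ^ 2 / (2 * Sig)) := by
      rw [if_pos hc]
      ring
    rw [hval]
    exact (aux_pos Sig (δstar - δm) (-z) hSig ha).neg
  · have ha : 0 < δm - δstar := sub_pos.2 (lt_of_not_ge hc)
    have hval : (0.5 - if δm ≤ δstar then (1:ℝ) else 0) * (δm - δstar) ^ 2 / Sig
        = (δm - δstar) ^ 2 / (2 * Sig) := by
      rw [if_neg hc]
      ring
    rw [hval]
    exact aux_pos Sig (δm - δstar) z hSig ha
end

section
/- If τ^{(n)}_u = Φ(a√n + z_u) with a > 0 and z_u = Φ^{-1}(u), then logit(τ^{(n)}_u) = (a²n)/2 + a z_u √n + o(√n) as n → ∞. -/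
open Real Set Filter Asymptotics MeasureTheory Topology

lemma gauss_form : (fun t : ℝ => Real.exp (-t ^ 2 / 2)) = fun t : ℝ => Real.exp (-(1/2) * t ^ 2) := by
  funext t; congr 1; ring

lemma gauss_integrable : Integrable (fun t : ℝ => Real.exp (-t ^ 2 / 2)) := by
  rw [gauss_form]; exact integrable_exp_neg_mul_sq (by norm_num)

lemma gauss_total : ∫ t : ℝ, Real.exp (-t ^ 2 / 2) = Real.sqrt (2 * π) := by
  rw [gauss_form, integral_gaussian]; congr 1; ring

noncomputable def gaussTail (x : ℝ) : ℝ := ∫ t in Ioi x, Real.exp (-t ^ 2 / 2)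

lemma gaussTail_pos (x : ℝ) : 0 < gaussTail x := by
  rw [gaussTail]
  rw [setIntegral_pos_iff_support_of_nonneg_ae
    (Eventually.of_forall fun t => (Real.exp_pos _).le) gauss_integrable.integrableOn]
  have : (Function.support fun t : ℝ => Real.exp (-t ^ 2 / 2)) = univ := by
    ext t; simp [Function.mem_support, (Real.exp_pos _).ne']
  rw [this, univ_inter]
  simp [Real.volume_Ioi]

lemma mul_gauss_integral (x : ℝ) :
    ∫ t in Ioi x, t * Real.exp (-t ^ 2 / 2) = Real.exp (-x ^ 2 / 2) := by
  have hderiv : ∀ t ∈ Ioi x, HasDerivAt (fun t : ℝ => -Real.exp (-t ^ 2 / 2))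
      (t * Real.exp (-t ^ 2 / 2)) t := by
    intro t _
    have h1 : HasDerivAt (fun t : ℝ => -t ^ 2 / 2) (-t) t := by
      have h := ((hasDerivAt_pow 2 t).neg).div_const 2
      norm_num at h
      refine h.congr_deriv ?_
      ring
    have h2 := (h1.exp).neg
    refine h2.congr_deriv ?_; ring
  have hint : IntegrableOn (fun t : ℝ => t * Real.exp (-t ^ 2 / 2)) (Ioi x) := by
    have : (fun t : ℝ => t * Real.exp (-t ^ 2 / 2))
        = fun t : ℝ => t * Real.exp (-(1/2) * t ^ 2) := by
      funext t; congr 2; ring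
    rw [this]; exact (integrable_mul_exp_neg_mul_sq (by norm_num)).integrableOn
  have htend : Tendsto (fun t : ℝ => -Real.exp (-t ^ 2 / 2)) atTop (𝓝 0) := by
    rw [show (0:ℝ) = -0 by norm_num]
    apply Tendsto.neg
    apply Real.tendsto_exp_atBot.comp
    have h2 : Tendsto (fun t : ℝ => t ^ 2 / 2) atTop atTop :=
      (tendsto_pow_atTop two_ne_zero).atTop_div_const two_pos
    have h3 := tendsto_neg_atTop_atBot.comp h2
    refine h3.congr fun t => by simp [Function.comp]; ring
  have hcont : ContinuousWithinAt (fun t : ℝ => -Real.exp (-t ^ 2 / 2)) (Ici x) x :=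
    (Continuous.continuousWithinAt (by continuity))
  have := integral_Ioi_of_hasDerivAt_of_tendsto hcont hderiv hint htend
  rw [this]; ring

lemma gaussTail_le {x : ℝ} (hx : 0 < x) : gaussTail x ≤ Real.exp (-x ^ 2 / 2) / x := by
  have h1 : gaussTail x ≤ ∫ t in Ioi x, x⁻¹ * (t * Real.exp (-t ^ 2 / 2)) := by
    rw [gaussTail]
    apply setIntegral_mono_on gauss_integrable.integrableOn
    · apply Integrable.const_mul
      have : (fun t : ℝ => t * Real.exp (-t ^ 2 / 2))
          = fun t : ℝ => t * Real.exp (-(1/2) * t ^ 2) := by funext t; congr 2; ring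
      rw [this]; exact (integrable_mul_exp_neg_mul_sq (by norm_num)).integrableOn
    · exact measurableSet_Ioi
    · intro t ht
      have htx : x < t := ht
      have h2 : 1 ≤ x⁻¹ * t := by
        rw [← div_eq_inv_mul]; rw [le_div_iff₀ hx]; linarith
      nlinarith [Real.exp_pos (-t ^ 2 / 2), mul_le_mul_of_nonneg_right h2 (Real.exp_pos (-t ^ 2 / 2)).le]
  rw [integral_const_mul, mul_gauss_integral] at h1
  rw [div_eq_inv_mul]; exact h1

lemma gaussTail_ge {x δ : ℝ} (hx : 0 < x) (hδ : 0 < δ) :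
    δ * Real.exp (-(x + δ) ^ 2 / 2) ≤ gaussTail x := by
  have h1 : ∫ t in Ioc x (x + δ), Real.exp (-t ^ 2 / 2) ≤ gaussTail x := by
    rw [gaussTail]
    apply setIntegral_mono_set gauss_integrable.integrableOn
      (Eventually.of_forall fun t => (Real.exp_pos _).le)
    exact (Ioc_subset_Ioi_self).eventuallyLE
  refine le_trans ?_ h1
  have h2 := setIntegral_ge_of_const_le_real (μ := volume) (s := Ioc x (x + δ))
    (c := Real.exp (-(x + δ) ^ 2 / 2))
    measurableSet_Ioc (by simp [Real.volume_Ioc]) ?_ gauss_integrable.integrableOn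
  · rw [Real.volume_real_Ioc_of_le (by linarith)] at h2
    calc δ * Real.exp (-(x + δ) ^ 2 / 2)
        = Real.exp (-(x + δ) ^ 2 / 2) * (x + δ - x) := by ring
      _ ≤ _ := h2
  · intro t ht
    apply Real.exp_le_exp.mpr
    have h3 : x < t := ht.1
    have h4 : t ≤ x + δ := ht.2
    nlinarith

lemma stdNormalCDF_eq (x : ℝ) :
    stdNormalCDF x = 1 - gaussTail x / Real.sqrt (2 * π) := by
  have hc : (0:ℝ) < Real.sqrt (2 * π) := Real.sqrt_pos.mpr (by positivity)
  rw [stdNormalCDF]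
  have h1 : ∫ t in Iic x, Real.exp (-t ^ 2 / 2) / Real.sqrt (2 * π)
      = (∫ t in Iic x, Real.exp (-t ^ 2 / 2)) / Real.sqrt (2 * π) := integral_div _ _
  rw [h1]
  have h2 := intervalIntegral.integral_Iic_add_Ioi (b := x) (μ := volume)
    gauss_integrable.integrableOn gauss_integrable.integrableOn
  rw [gauss_total] at h2
  rw [gaussTail, eq_sub_iff_add_eq, ← add_div, h2, div_self hc.ne']

/-- Second-order expansion of the logit of the proxy quantile: if
τ⁽ⁿ⁾_u = Φ(a√n + z_u) with a > 0 and z_u = Φ⁻¹(u), then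
logit(τ⁽ⁿ⁾_u) = (a²/2)n + a·z_u·√n + o(√n) as n → ∞. -/
theorem logit_quantile_expansion (a : ℝ) (ha : 0 < a)
    (u : ℝ) (hu : u ∈ Ioo (0 : ℝ) 1) (z : ℝ) (hz : stdNormalCDF z = u) :
    (fun n : ℝ =>
        logit (stdNormalCDF (a * Real.sqrt n + z)) - a ^ 2 * n / 2 - a * z * Real.sqrt n)
      =o[atTop] fun n : ℝ => Real.sqrt n := by
  have hπ : (0:ℝ) < 2 * π := by positivity
  set c : ℝ := Real.sqrt (2 * π) with hcdef
  have hc1 : 1 < c := by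
    rw [hcdef, show (1:ℝ) = Real.sqrt 1 by simp]
    exact Real.sqrt_lt_sqrt (by norm_num) (by nlinarith [Real.pi_gt_three])
  have hc0 : (0:ℝ) < c := by linarith
  -- x n := a √n + z tends to infinity
  have hsq : Tendsto Real.sqrt atTop atTop := by
    rw [tendsto_atTop_atTop]
    intro b
    refine ⟨(max b 0) ^ 2, fun n hn => ?_⟩
    calc b ≤ max b 0 := le_max_left _ _
      _ = Real.sqrt ((max b 0) ^ 2) := (Real.sqrt_sq (le_max_right _ _)).symm
      _ ≤ Real.sqrt n := Real.sqrt_le_sqrt hn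
  have hx_top : Tendsto (fun n : ℝ => a * Real.sqrt n + z) atTop atTop :=
    tendsto_atTop_add_const_right _ z (hsq.const_mul_atTop ha)
  -- the tail function
  set T : ℝ → ℝ := fun n => gaussTail (a * Real.sqrt n + z) / c with hTdef
  -- basic eventual facts
  have hreg : ∀ᶠ n : ℝ in atTop, 1 ≤ n ∧ 1 ≤ a * Real.sqrt n + z :=
    (eventually_ge_atTop 1).and (hx_top.eventually_ge_atTop 1)
  -- T n → 0
  have hT_nonneg : ∀ n : ℝ, 0 ≤ T n := fun n => le_of_lt (div_pos (gaussTail_pos _) hc0)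
  have hT_le_inv : ∀ᶠ n : ℝ in atTop, T n ≤ (fun m : ℝ => a * Real.sqrt m + z)⁻¹ n := by
    filter_upwards [hreg] with n ⟨hn, hX⟩
    have hX0 : (0:ℝ) < a * Real.sqrt n + z := by linarith
    have h1 : gaussTail (a * Real.sqrt n + z) ≤ Real.exp (-(a * Real.sqrt n + z) ^ 2 / 2) / (a * Real.sqrt n + z) := gaussTail_le hX0
    have h2 : Real.exp (-(a * Real.sqrt n + z) ^ 2 / 2) ≤ 1 :=
      Real.exp_le_one_iff.mpr (by nlinarith)
    have h3 : T n ≤ (Real.exp (-(a * Real.sqrt n + z) ^ 2 / 2) / (a * Real.sqrt n + z)) / c :=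
      div_le_div₀ (by positivity) h1 hc0 le_rfl
    calc T n ≤ (Real.exp (-(a * Real.sqrt n + z) ^ 2 / 2) / (a * Real.sqrt n + z)) / c := h3
      _ ≤ (1 / (a * Real.sqrt n + z)) / 1 :=
          div_le_div₀ (by positivity) (div_le_div₀ (by norm_num) h2 hX0 le_rfl) one_pos hc1.le
      _ = (fun m : ℝ => a * Real.sqrt m + z)⁻¹ n := by simp [one_div]
  have hT_to0 : Tendsto T atTop (𝓝 0) :=
    tendsto_of_tendsto_of_tendsto_of_le_of_le' tendsto_const_nhds hx_top.inv_tendsto_atTop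
      (Eventually.of_forall hT_nonneg) hT_le_inv
  -- log (1 - T n) → 0
  have hlog1T : Tendsto (fun n => Real.log (1 - T n)) atTop (𝓝 0) := by
    have h1 : Tendsto (fun n => 1 - T n) atTop (𝓝 1) := by
      simpa using tendsto_const_nhds.sub hT_to0
    have h2 := (Real.continuousAt_log one_ne_zero).tendsto.comp h1
    simpa using (show Tendsto (fun n => Real.log (1 - T n)) atTop (𝓝 (Real.log 1)) from h2)
  have hinvs : Tendsto (fun n : ℝ => (Real.sqrt n)⁻¹) atTop (𝓝 0) := by
    have := hsq.inv_tendsto_atTop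
    exact this
  -- log X / √n → 0
  have hlogx : Tendsto (fun n : ℝ => Real.log (a * Real.sqrt n + z) * (Real.sqrt n)⁻¹) atTop (𝓝 0) := by
    have h1 : Tendsto (fun y : ℝ => Real.log y / y) atTop (𝓝 0) := by
      have := tendsto_pow_log_div_mul_add_atTop 1 0 1 one_ne_zero
      simpa using this
    have h2 := h1.comp hx_top
    have h3 : Tendsto (fun n : ℝ => (a * Real.sqrt n + z) * (Real.sqrt n)⁻¹) atTop (𝓝 a) := by
      have hb : Tendsto (fun n : ℝ => a + z * (Real.sqrt n)⁻¹) atTop (𝓝 a) := by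
        have h0 : Tendsto (fun _ : ℝ => a) atTop (𝓝 a) := tendsto_const_nhds
        have hz0 : Tendsto (fun _ : ℝ => z) atTop (𝓝 z) := tendsto_const_nhds
        have := h0.add (hz0.mul hinvs)
        simpa using this
      refine hb.congr' ?_
      filter_upwards [eventually_ge_atTop (1:ℝ)] with n hn
      have hs : Real.sqrt n ≠ 0 := by
        have : (1:ℝ) ≤ Real.sqrt n := by
          simpa using Real.sqrt_le_sqrt hn
        linarith
      field_simp
    have h4 := h2.mul h3
    rw [zero_mul] at h4
    refine h4.congr' ?_
    filter_upwards [hreg] with n ⟨hn, hX⟩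
    have hX0 : a * Real.sqrt n + z ≠ 0 := by linarith
    simp only [Function.comp]
    field_simp
  -- 1/(2 X^2) → 0
  have hX2 : Tendsto (fun n : ℝ => 1 / (2 * (a * Real.sqrt n + z) ^ 2)) atTop (𝓝 0) := by
    have h1 : Tendsto (fun n : ℝ => 2 * (a * Real.sqrt n + z) ^ 2) atTop atTop := by
      apply Tendsto.const_mul_atTop two_pos
      have := hx_top.atTop_mul_atTop₀ hx_top
      refine this.congr fun n => by ring
    have h2 := h1.inv_tendsto_atTop
    refine h2.congr fun n => ?_
    simp only [Pi.inv_apply, one_div]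
  -- the bound functions
  set L : ℝ → ℝ := fun n => Real.log (1 - T n) + z ^ 2 / 2
      + Real.log (a * Real.sqrt n + z) + Real.log c with hLdef
  set U : ℝ → ℝ := fun n => L n + (1 + 1 / (2 * (a * Real.sqrt n + z) ^ 2)) with hUdef
  have hLlim : Tendsto (fun n => L n / Real.sqrt n) atTop (𝓝 0) := by
    have h := ((hlog1T.add_const (z ^ 2 / 2 + Real.log c)).mul hinvs).add hlogx
    rw [show ((0:ℝ) + (z ^ 2 / 2 + Real.log c)) * 0 + 0 = 0 by ring] at h
    refine h.congr fun n => ?_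
    rw [hLdef]
    simp only [div_eq_mul_inv]
    ring
  have hUlim : Tendsto (fun n => U n / Real.sqrt n) atTop (𝓝 0) := by
    have h1 : Tendsto (fun _ : ℝ => (1:ℝ)) atTop (𝓝 1) := tendsto_const_nhds
    have h := hLlim.add ((h1.add hX2).mul hinvs)
    rw [show (0:ℝ) + (1 + 0) * 0 = 0 by ring] at h
    refine h.congr fun n => ?_
    rw [hUdef]
    simp only [div_eq_mul_inv]
    ring
  -- pointwise bounds
  have hbounds : ∀ᶠ n : ℝ in atTop,
      L n ≤ logit (stdNormalCDF (a * Real.sqrt n + z)) - a ^ 2 * n / 2 - a * z * Real.sqrt n ∧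
      logit (stdNormalCDF (a * Real.sqrt n + z)) - a ^ 2 * n / 2 - a * z * Real.sqrt n ≤ U n := by
    filter_upwards [hreg] with n ⟨hn, hX⟩
    set X : ℝ := a * Real.sqrt n + z with hXdef
    have hX0 : (0:ℝ) < X := by linarith
    have hT0 : 0 < T n := div_pos (gaussTail_pos _) hc0
    -- upper and lower bounds on T n
    have hTle : T n ≤ Real.exp (-X ^ 2 / 2) / (X * c) := by
      have h1 := gaussTail_le hX0
      have h3 : T n ≤ (Real.exp (-X ^ 2 / 2) / X) / c :=
        div_le_div₀ (by positivity) h1 hc0 le_rfl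
      rwa [div_div] at h3
    have hTge : Real.exp (-(X + 1 / X) ^ 2 / 2) / (X * c) ≤ T n := by
      have h1 := gaussTail_ge hX0 (one_div_pos.mpr hX0)
      have h2 : ((1 / X) * Real.exp (-(X + 1 / X) ^ 2 / 2)) / c
          = Real.exp (-(X + 1 / X) ^ 2 / 2) / (X * c) := by
        rw [one_div, inv_mul_eq_div, div_div]
      rw [← h2]
      exact div_le_div₀ (gaussTail_pos _).le h1 hc0 le_rfl
    have hT1 : T n < 1 := by
      have h2 : Real.exp (-X ^ 2 / 2) ≤ 1 := Real.exp_le_one_iff.mpr (by nlinarith)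
      have h3 : Real.exp (-X ^ 2 / 2) / (X * c) ≤ 1 / c :=
        div_le_div₀ (by norm_num) h2 hc0 (by nlinarith)
      have h4 : (1:ℝ) / c < 1 := by rw [div_lt_one hc0]; exact hc1
      linarith
    -- logit formula
    have hΦ : stdNormalCDF X = 1 - T n := by
      rw [stdNormalCDF_eq, hTdef]
    have hlogit : logit (stdNormalCDF X) = Real.log (1 - T n) - Real.log (T n) := by
      rw [hΦ, logit, show (1:ℝ) - (1 - T n) = T n by ring]
    -- log bounds
    have hXc0 : (0:ℝ) < X * c := by positivity
    have hlog_le : Real.log (T n) ≤ -X ^ 2 / 2 - Real.log X - Real.log c := by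
      have h := Real.log_le_log hT0 hTle
      rwa [Real.log_div (Real.exp_ne_zero _) hXc0.ne', Real.log_exp,
        Real.log_mul hX0.ne' hc0.ne', ← sub_sub] at h
    have hlog_ge : -(X + 1 / X) ^ 2 / 2 - Real.log X - Real.log c ≤ Real.log (T n) := by
      have h := Real.log_le_log (by positivity) hTge
      rwa [Real.log_div (Real.exp_ne_zero _) hXc0.ne', Real.log_exp,
        Real.log_mul hX0.ne' hc0.ne', ← sub_sub] at h
    have hiden : (X + 1 / X) ^ 2 / 2 = X ^ 2 / 2 + 1 + 1 / (2 * X ^ 2) := by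
      field_simp
      ring
    have hs2 : Real.sqrt n ^ 2 = n := Real.sq_sqrt (by linarith)
    have hx2 : X ^ 2 / 2 = a ^ 2 * n / 2 + a * z * Real.sqrt n + z ^ 2 / 2 := by
      rw [hXdef]
      linear_combination (a ^ 2 / 2) * hs2
    constructor
    · rw [hlogit, hLdef]
      have : -Real.log (T n) ≥ X ^ 2 / 2 + Real.log X + Real.log c := by linarith
      linarith [hx2]
    · rw [hlogit, hUdef, hLdef]
      have : -Real.log (T n) ≤ (X + 1 / X) ^ 2 / 2 + Real.log X + Real.log c := by linarith
      rw [hiden] at this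
      linarith [hx2]
  -- squeeze
  have hmid : Tendsto (fun n : ℝ =>
      (logit (stdNormalCDF (a * Real.sqrt n + z)) - a ^ 2 * n / 2 - a * z * Real.sqrt n)
        / Real.sqrt n) atTop (𝓝 0) := by
    apply tendsto_of_tendsto_of_tendsto_of_le_of_le' hLlim hUlim
    · filter_upwards [hbounds, eventually_ge_atTop (1:ℝ)] with n ⟨h1, _⟩ hn
      have hs : (0:ℝ) < Real.sqrt n := Real.sqrt_pos.mpr (by linarith)
      exact div_le_div_of_nonneg_right h1 hs.le
    · filter_upwards [hbounds, eventually_ge_atTop (1:ℝ)] with n ⟨_, h2⟩ hn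
      have hs : (0:ℝ) < Real.sqrt n := Real.sqrt_pos.mpr (by linarith)
      exact div_le_div_of_nonneg_right h2 hs.le
  rw [isLittleO_iff_tendsto']
  · exact hmid
  · filter_upwards [eventually_ge_atTop (1:ℝ)] with n hn h
    exfalso
    have : (1:ℝ) ≤ Real.sqrt n := by simpa using Real.sqrt_le_sqrt hn
    rw [h] at this
    linarith
end
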